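/- arXiv:1110.1053 — 4 statements merged into one kernel-verified Lean document; each statement's English description precedes it below -/
import Mathlib

section
/- Let F be a field and let G be a subgroup of SL(2,F) consisting of upper triangular matrices. Suppose that for every m in the image M of the map p : G → F* sending an upper triangular matrix to its (1,1) entry, there exists b in M with b² = m. Let A ⊆ F be the set of a such that the unipotent matrix [[1,a],[0,1]] lies in G. Then for all m ∈ M and a ∈ A, the product m·a lies in A. -/
/-! Conjugating the unipotent matrix `[[1, a], [0, 1]]` by an upper triangular
`g = [[b, c], [0, b⁻¹]]` of determinant one gives `[[1, b² a], [0, 1]]`. Hence if `m = b²`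
with `b ∈ M`, conjugating by a preimage of `b` in `G` carries `a ∈ A` to `m a ∈ A`. -/

open Matrix

namespace Matrix.SpecialLinearGroup

theorem coe_conj_unipotent_of_upperTriangular {R : Type*} [CommRing R]
    (g u : SpecialLinearGroup (Fin 2) R) (hg : (g : Matrix (Fin 2) (Fin 2) R) 1 0 = 0) {a : R}
    (hu : (u : Matrix (Fin 2) (Fin 2) R) = !![1, a; 0, 1]) :
    ((g * u * g⁻¹ : SpecialLinearGroup (Fin 2) R) : Matrix (Fin 2) (Fin 2) R) =
      !![1, (g : Matrix (Fin 2) (Fin 2) R) 0 0 ^ 2 * a; 0, 1] := by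
  have hdet : (g : Matrix (Fin 2) (Fin 2) R) 0 0 * (g : Matrix (Fin 2) (Fin 2) R) 1 1 = 1 := by
    simpa only [det_fin_two, hg, mul_zero, sub_zero] using g.det_coe
  rw [coe_mul, coe_mul, coe_inv, hu, adjugate_fin_two, eta_fin_two (g : Matrix _ _ R), hg]
  ext i j
  fin_cases i <;> fin_cases j <;> simp <;>
    first | linear_combination hdet | ring

end Matrix.SpecialLinearGroup

theorem stmt_0 (F : Type*) [Field F]
    (G : Subgroup (Matrix.SpecialLinearGroup (Fin 2) F))
    (hup : ∀ g ∈ G, (g : Matrix (Fin 2) (Fin 2) F) 1 0 = 0)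
    (M A : Set F)
    (hM : M = {m : F | ∃ g ∈ G, (g : Matrix (Fin 2) (Fin 2) F) 0 0 = m})
    (hA : A = {a : F | ∃ g ∈ G, (g : Matrix (Fin 2) (Fin 2) F) = !![1, a; 0, 1]})
    (hsq : ∀ m ∈ M, ∃ b ∈ M, b ^ 2 = m) :
    ∀ m ∈ M, ∀ a ∈ A, m * a ∈ A := by
  subst hM hA
  intro m hm a ⟨u, hu, hua⟩
  obtain ⟨b, ⟨g, hg, hgb⟩, rfl⟩ := hsq m hm
  refine ⟨g * u * g⁻¹, mul_mem (mul_mem hg hu) (inv_mem hg), ?_⟩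
  rw [SpecialLinearGroup.coe_conj_unipotent_of_upperTriangular g u (hup g hg) hua, hgb]
end

section
/- Let F be a field and G a subgroup of SL(2,F) of upper triangular matrices, with M and A defined as before, and assume every element of M has a square root in M. For m ∈ M, let Γ_m = {γ ∈ F : [[m,γ],[0,m⁻¹]] ∈ G}. Then for γ, γ' ∈ F with γ ∈ Γ_m: γ' ∈ Γ_m if and only if γ − γ' ∈ A. -/
open Matrix
open scoped MatrixGroups

/-!
Two elements of `G` with the same diagonal `(m, m⁻¹)` and upper-right entries `γ, γ'` differ by
the unipotent `g'⁻¹ g = [[1, m⁻¹ (γ - γ')], [0, 1]]`. Conjugating a unipotent `[[1, a], [0, 1]]`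
by an element with diagonal `(b, b⁻¹)` gives `[[1, b² a], [0, 1]]`, so a square root `b` of `m`
in `M` turns `m⁻¹ (γ - γ')` into `γ - γ'` and back.
-/

namespace Matrix.SpecialLinearGroup

variable {F : Type*} [Field F] {a b c δ ε m γ γ' : F}

theorem ne_zero_of_coe_eq_upper {g : SL(2, F)}
    (hg : (g : Matrix (Fin 2) (Fin 2) F) = !![b, δ; 0, b⁻¹]) :
    b ≠ 0 := by
  rintro rfl
  simpa [hg] using g.det_coe

theorem coe_inv_of_coe_eq_upper {g : SL(2, F)}
    (hg : (g : Matrix (Fin 2) (Fin 2) F) = !![b, δ; 0, b⁻¹]) :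
    ((g⁻¹ : SL(2, F)) : Matrix (Fin 2) (Fin 2) F) = !![b⁻¹, -δ; 0, b⁻¹⁻¹] := by
  rw [coe_inv, hg, adjugate_fin_two_of, neg_zero, inv_inv]

theorem coe_mul_of_coe_eq_upper {g h : SL(2, F)}
    (hg : (g : Matrix (Fin 2) (Fin 2) F) = !![b, δ; 0, b⁻¹])
    (hh : (h : Matrix (Fin 2) (Fin 2) F) = !![c, ε; 0, c⁻¹]) :
    ((g * h : SL(2, F)) : Matrix (Fin 2) (Fin 2) F) =
      !![b * c, b * ε + δ * c⁻¹; 0, (b * c)⁻¹] := by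
  rw [coe_mul, hg, hh, mul_fin_two, mul_inv]
  simp

theorem coe_conj_unipotent {h u : SL(2, F)}
    (hh : (h : Matrix (Fin 2) (Fin 2) F) = !![b, δ; 0, b⁻¹])
    (hu : (u : Matrix (Fin 2) (Fin 2) F) = !![1, a; 0, 1]) :
    ((h * u * h⁻¹ : SL(2, F)) : Matrix (Fin 2) (Fin 2) F) = !![1, b ^ 2 * a; 0, 1] := by
  have hb := ne_zero_of_coe_eq_upper hh
  have hu' : (u : Matrix (Fin 2) (Fin 2) F) = !![1, a; 0, (1 : F)⁻¹] := by rwa [inv_one]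
  rw [coe_mul_of_coe_eq_upper (coe_mul_of_coe_eq_upper hh hu') (coe_inv_of_coe_eq_upper hh)]
  simp only [mul_one, mul_inv_cancel₀ hb, inv_one, inv_inv]
  congr 4
  ring

theorem coe_inv_mul_of_same_diag {g g' : SL(2, F)}
    (hg : (g : Matrix (Fin 2) (Fin 2) F) = !![m, γ; 0, m⁻¹])
    (hg' : (g' : Matrix (Fin 2) (Fin 2) F) = !![m, γ'; 0, m⁻¹]) :
    ((g'⁻¹ * g : SL(2, F)) : Matrix (Fin 2) (Fin 2) F) = !![1, m⁻¹ * (γ - γ'); 0, 1] := by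
  have hm := ne_zero_of_coe_eq_upper hg
  rw [coe_mul_of_coe_eq_upper (coe_inv_of_coe_eq_upper hg') hg]
  simp only [inv_mul_cancel₀ hm, inv_one]
  congr 4
  ring

theorem coe_mul_inv_unipotent {g u : SL(2, F)}
    (hg : (g : Matrix (Fin 2) (Fin 2) F) = !![m, γ; 0, m⁻¹])
    (hu : (u : Matrix (Fin 2) (Fin 2) F) = !![1, a; 0, 1]) :
    ((g * u⁻¹ : SL(2, F)) : Matrix (Fin 2) (Fin 2) F) = !![m, γ - m * a; 0, m⁻¹] := by
  have hu' : (u : Matrix (Fin 2) (Fin 2) F) = !![1, a; 0, (1 : F)⁻¹] := by rwa [inv_one]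
  rw [coe_mul_of_coe_eq_upper hg (coe_inv_of_coe_eq_upper hu')]
  simp only [inv_one, mul_one]
  congr 4
  ring

end Matrix.SpecialLinearGroup

open Matrix.SpecialLinearGroup in
theorem stmt_1_general (F : Type*) [Field F]
    (G : Subgroup (Matrix.SpecialLinearGroup (Fin 2) F))
    (M A : Set F) (Γ : F → Set F)
    (hM : M = {m : F | ∃ γ : F, ∃ g ∈ G, (g : Matrix (Fin 2) (Fin 2) F) = !![m, γ; 0, m⁻¹]})
    (hA : A = {a : F | ∃ g ∈ G, (g : Matrix (Fin 2) (Fin 2) F) = !![1, a; 0, 1]})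
    (hΓ : ∀ m : F, Γ m = {γ : F | ∃ g ∈ G, (g : Matrix (Fin 2) (Fin 2) F) = !![m, γ; 0, m⁻¹]})
    (hsq : ∀ m ∈ M, ∃ b ∈ M, b ^ 2 = m) :
    ∀ m ∈ M, ∀ γ γ' : F, γ ∈ Γ m → (γ' ∈ Γ m ↔ γ - γ' ∈ A) := by
  intro m hm γ γ' hγ
  obtain ⟨b, hbM, rfl⟩ := hsq m hm
  rw [hM] at hbM
  obtain ⟨δ, h, hhG, hh⟩ := hbM
  rw [hΓ] at hγ ⊢
  obtain ⟨g, hgG, hg⟩ := hγ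
  rw [hA]
  have hb2 : b ^ 2 ≠ 0 := pow_ne_zero 2 (ne_zero_of_coe_eq_upper hh)
  constructor
  · rintro ⟨g', hg'G, hg'⟩
    refine ⟨h * (g'⁻¹ * g) * h⁻¹,
      G.mul_mem (G.mul_mem hhG (G.mul_mem (G.inv_mem hg'G) hgG)) (G.inv_mem hhG), ?_⟩
    rw [coe_conj_unipotent hh (coe_inv_mul_of_same_diag hg hg'), mul_inv_cancel_left₀ hb2]
  · rintro ⟨u, huG, hu⟩
    have hwG : h⁻¹ * u * h⁻¹⁻¹ ∈ G :=
      G.mul_mem (G.mul_mem (G.inv_mem hhG) huG) (G.inv_mem (G.inv_mem hhG))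
    refine ⟨g * (h⁻¹ * u * h⁻¹⁻¹)⁻¹, G.mul_mem hgG (G.inv_mem hwG), ?_⟩
    rw [coe_mul_inv_unipotent hg (coe_conj_unipotent (coe_inv_of_coe_eq_upper hh) hu),
      inv_pow, mul_inv_cancel_left₀ hb2, sub_sub_cancel]

theorem stmt_1 (F : Type*) [Field F]
    (G : Subgroup (Matrix.SpecialLinearGroup (Fin 2) F))
    (hup : ∀ g ∈ G, (g : Matrix (Fin 2) (Fin 2) F) 1 0 = 0)
    (M A : Set F) (Γ : F → Set F)
    (hM : M = {m : F | ∃ γ : F, ∃ g ∈ G, (g : Matrix (Fin 2) (Fin 2) F) = !![m, γ; 0, m⁻¹]})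
    (hA : A = {a : F | ∃ g ∈ G, (g : Matrix (Fin 2) (Fin 2) F) = !![1, a; 0, 1]})
    (hΓ : ∀ m : F, Γ m = {γ : F | ∃ g ∈ G, (g : Matrix (Fin 2) (Fin 2) F) = !![m, γ; 0, m⁻¹]})
    (hsq : ∀ m ∈ M, ∃ b ∈ M, b ^ 2 = m) :
    ∀ m ∈ M, ∀ γ γ' : F, γ ∈ Γ m → (γ' ∈ Γ m ↔ γ - γ' ∈ A) :=
  stmt_1_general F G M A Γ hM hA hΓ hsq
end

section
/- Let R be a commutative ring (with 2 invertible) with commuting derivations ∂_z and ∂'. Given r ∈ R, the system of equations ∂_z a = c − br, ∂_z b = d − a, ∂_z c = (a−d)r + ∂'r, ∂_z d = br − c has a solution (a,b,c,d) ∈ R⁴ if and only if there exists b ∈ R satisfying the third-order equation (1/2)·∂_z³ b = 2(∂_z b)·r + b·(∂_z r) − ∂' r. -/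
/-!
Subtracting the equations for `a` and `d` gives `∂_z² b = 2 (b r - c)`; differentiating once more
and substituting `∂_z c` yields the third-order equation (multiplied by `2`). Conversely, a
solution `b` extends to a solution of the system with `a = -½ ∂_z b`, `d = ½ ∂_z b` and
`c = b r - ½ ∂_z² b`, using that `∂_z` kills `½`.
-/

namespace Derivation

variable {A R : Type*} [CommRing A] [CommRing R] [Algebra A R] (D : Derivation A R R)

@[simp]
theorem map_ofNat (n : ℕ) [n.AtLeastTwo] : D (OfNat.ofNat n : R) = 0 := by
  simpa using D.map_natCast (OfNat.ofNat n)

theorem map_invOf_two [Invertible (2 : R)] : D (⅟2) = 0 := by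
  rw [leibniz_invOf, map_ofNat, smul_zero]

variable {D} {r s : R}

theorem third_deriv_eq_of_system {a b c d : R} (ha : D a = c - b * r) (hb : D b = d - a)
    (hc : D c = (a - d) * r + s) (hd : D d = b * r - c) :
    D (D (D b)) = 2 * (2 * D b * r + b * D r - s) := by
  have hb2 : D (D b) = 2 * (b * r - c) := by
    rw [hb, D.map_sub, hd, ha]
    ring
  rw [hb2, D.leibniz, D.map_sub, D.leibniz, hc, hb, D.map_ofNat]
  simp only [smul_eq_mul]
  ring

theorem exists_system_of_third_deriv_eq [Invertible (2 : R)] {b : R}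
    (h : D (D (D b)) = 2 * (2 * D b * r + b * D r - s)) :
    ∃ a c d : R, D a = c - b * r ∧ D b = d - a ∧ D c = (a - d) * r + s ∧ D d = b * r - c := by
  refine ⟨-(⅟2 * D b), b * r - ⅟2 * D (D b), ⅟2 * D b, ?_, ?_, ?_, ?_⟩
  · simp only [D.map_neg, D.leibniz, D.map_invOf_two, smul_eq_mul]
    ring
  · linear_combination -D b * invOf_two_add_invOf_two (R := R)
  · simp only [D.map_sub, D.leibniz, D.map_invOf_two, smul_eq_mul, h,
      invOf_mul_cancel_left]
    linear_combination D b * r * invOf_two_add_invOf_two (R := R)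
  · simp only [D.leibniz, D.map_invOf_two, smul_eq_mul]
    ring

end Derivation

theorem stmt_9_general (R : Type*) [CommRing R] [Invertible (2 : R)]
    (δz δ' : Derivation ℤ R R)
    (r : R) :
    (∃ a b c d : R,
        δz a = c - b * r ∧ δz b = d - a ∧ δz c = (a - d) * r + δ' r ∧ δz d = b * r - c) ↔
      (∃ b : R, ⅟(2 : R) * δz (δz (δz b)) = 2 * δz b * r + b * δz r - δ' r) := by
  simp_rw [invOf_mul_eq_iff_eq_mul_left]
  constructor
  · rintro ⟨a, b, c, d, ha, hb, hc, hd⟩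
    exact ⟨b, Derivation.third_deriv_eq_of_system ha hb hc hd⟩
  · rintro ⟨b, hb⟩
    obtain ⟨a, c, d, h⟩ := Derivation.exists_system_of_third_deriv_eq hb
    exact ⟨a, b, c, d, h⟩

theorem stmt_9 (R : Type*) [CommRing R] [Invertible (2 : R)]
    (δz δ' : Derivation ℤ R R)
    (hcomm : ∀ x, δz (δ' x) = δ' (δz x))
    (r : R) :
    (∃ a b c d : R,
        δz a = c - b * r ∧ δz b = d - a ∧ δz c = (a - d) * r + δ' r ∧ δz d = b * r - c) ↔
      (∃ b : R, ⅟(2 : R) * δz (δz (δz b)) = 2 * δz b * r + b * δz r - δ' r) :=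
  stmt_9_general R δz δ' r
end

section
/- Let F be a field of characteristic 0 and t ∈ F. There is no polynomial b(z) ∈ F[z] satisfying (1/2)·∂_z³ b = 2·(∂_z b)·(z²/4 + t) + b·(z/2) − 1, and moreover no rational function b(z) ∈ F(z) satisfies this equation (any rational solution would have to be a polynomial since z²/4 + t has no poles, and comparing leading coefficients of degree ν gives (ν+1)·f/2 = 0 for the leading coefficient f, a contradiction). -/
/-!
Multiplying by 2, the equation reads `b''' = z (z b)' + 4t b' - 2`. For a polynomial `b` of
degree `ν` the coefficient of `z^(ν+1)` on the right is `(ν + 1)` times the leading coefficient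
of `b`, while the left side has degree below `ν`; so `b = 0`, which is not a solution either.

A rational solution is a polynomial: if `b` had a pole of order `n ≥ 1` at an irreducible `r`,
then `δ³ b` would have a pole of order exactly `n + 3` at `r` (each derivation raises the order by
one, as `r` is separable in characteristic zero), whereas the right-hand side has a pole of order
at most `n + 1` there.
-/

open Polynomial

namespace Polynomial

theorem coeff_X_mul_derivative_X_mul {R : Type*} [CommSemiring R] (b : R[X]) (k : ℕ) :
    (X * derivative (X * b)).coeff (k + 1) = (k + 1) * b.coeff k := by
  rw [coeff_X_mul, coeff_derivative, coeff_X_mul]; ring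

theorem derivative_derivative_derivative_ne {R : Type*} [CommRing R] [IsDomain R] [CharZero R]
    (c : R) {e : R} (he : e ≠ 0) (b : R[X]) :
    derivative (derivative (derivative b)) ≠
      X * derivative (X * b) + C c * derivative b - C e := by
  intro h
  obtain rfl | hb := eq_or_ne b 0
  · simp only [derivative_zero, mul_zero, add_zero, zero_sub, zero_eq_neg, C_eq_zero] at h
    exact he h
  have hcoeff := congrArg (coeff · (b.natDegree + 1)) h
  simp only [coeff_sub, coeff_add, coeff_X_mul_derivative_X_mul, coeff_C_mul, coeff_derivative,
    coeff_C, Nat.add_one_ne_zero, if_false, sub_zero] at hcoeff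
  have hvanish (k : ℕ) : b.coeff (b.natDegree + k + 1) = 0 :=
    coeff_eq_zero_of_natDegree_lt (by omega)
  rw [hvanish 3, hvanish 1, coeff_natDegree] at hcoeff
  have : ((b.natDegree : R) + 1) * b.leadingCoeff = 0 := by linear_combination -hcoeff
  exact mul_ne_zero (Nat.cast_add_one_ne_zero _) (leadingCoeff_ne_zero.mpr hb) this

end Polynomial

theorem Prime.not_dvd_derivative {F : Type*} [Field F] [CharZero F] {r : F[X]} (hr : Prime r) :
    ¬ r ∣ derivative r := fun hdvd =>
  hr.not_isUnit (hr.irreducible.separable.isUnit_of_dvd' dvd_rfl hdvd)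

namespace RatFunc

variable {F : Type*} [Field F]

local notation "ι" => algebraMap F[X] (RatFunc F)

theorem derivation_algebraMap_eq_derivative {δ : Derivation ℤ (RatFunc F) (RatFunc F)}
    (hδX : δ X = 1) (hδC : ∀ c : F, δ (C c) = 0) (p : F[X]) :
    δ (ι p) = ι (derivative p) := by
  induction p using Polynomial.induction_on' with
  | add p q hp hq => rw [map_add, map_add, hp, hq, derivative_add, map_add]
  | monomial n a =>
    rw [← C_mul_X_pow_eq_monomial, derivative_mul, derivative_C, derivative_X_pow]
    simp only [zero_mul, zero_add, map_mul, map_pow, algebraMap_C, algebraMap_X,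
      Derivation.leibniz, Derivation.leibniz_pow, hδC, hδX, smul_eq_mul, nsmul_eq_mul,
      map_natCast]
    ring

theorem algebraMap_div_eq_algebraMap_div_iff {a b c d : F[X]} (hb : b ≠ 0) (hd : d ≠ 0) :
    ι a / ι b = ι c / ι d ↔ a * d = c * b := by
  rw [div_eq_div_iff (algebraMap_ne_zero hb) (algebraMap_ne_zero hd), ← map_mul, ← map_mul,
    (algebraMap_injective F).eq_iff]

variable {δ : Derivation ℤ (RatFunc F) (RatFunc F)}

theorem derivation_algebraMap_div (hδ : ∀ p, δ (ι p) = ι (derivative p)) (a : F[X]) {d : F[X]}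
    (hd : d ≠ 0) : δ (ι a / ι d) = ι (derivative a * d - a * derivative d) / ι (d ^ 2) := by
  simp only [div_eq_mul_inv, Derivation.leibniz, Derivation.leibniz_inv, hδ, smul_eq_mul,
    map_sub, map_mul, map_pow]
  field_simp [algebraMap_ne_zero hd]
  ring

def HasPoleOrderLE (r : F[X]) (n : ℕ) (x : RatFunc F) : Prop :=
  ∃ a s : F[X], ¬ r ∣ s ∧ x = ι a / ι (r ^ n * s)

def HasPoleOfOrder (r : F[X]) (n : ℕ) (x : RatFunc F) : Prop :=
  ∃ a s : F[X], ¬ r ∣ a ∧ ¬ r ∣ s ∧ x = ι a / ι (r ^ n * s)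

variable {r : F[X]} {m n : ℕ} {x y : RatFunc F}

theorem HasPoleOfOrder.hasPoleOrderLE (h : HasPoleOfOrder r n x) : HasPoleOrderLE r n x :=
  let ⟨a, s, _, hs, hx⟩ := h; ⟨a, s, hs, hx⟩

theorem hasPoleOrderLE_algebraMap (hr : Prime r) (n : ℕ) (p : F[X]) :
    HasPoleOrderLE r n (ι p) :=
  ⟨p * r ^ n, 1, hr.not_dvd_one, by
    rw [mul_one, map_mul,
      mul_div_cancel_right₀ _ (algebraMap_ne_zero (pow_ne_zero _ hr.ne_zero))]⟩

theorem HasPoleOrderLE.mono (hr : Prime r) (h : HasPoleOrderLE r m x) (hmn : m ≤ n) :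
    HasPoleOrderLE r n x := by
  obtain ⟨a, s, hs, rfl⟩ := h
  obtain ⟨k, rfl⟩ := Nat.exists_eq_add_of_le hmn
  have hs0 : s ≠ 0 := by rintro rfl; exact hs (dvd_zero r)
  refine ⟨a * r ^ k, s, hs, ?_⟩
  rw [algebraMap_div_eq_algebraMap_div_iff (mul_ne_zero (pow_ne_zero _ hr.ne_zero) hs0)
    (mul_ne_zero (pow_ne_zero _ hr.ne_zero) hs0)]
  ring

theorem HasPoleOrderLE.add (hr : Prime r) (hx : HasPoleOrderLE r n x) (hy : HasPoleOrderLE r n y) :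
    HasPoleOrderLE r n (x + y) := by
  obtain ⟨a, s, hs, rfl⟩ := hx
  obtain ⟨b, t, ht, rfl⟩ := hy
  have hs0 : s ≠ 0 := by rintro rfl; exact hs (dvd_zero r)
  have ht0 : t ≠ 0 := by rintro rfl; exact ht (dvd_zero r)
  refine ⟨a * t + b * s, s * t, fun hst => (hr.dvd_or_dvd hst).elim hs ht, ?_⟩
  simp only [map_mul, map_add]
  field_simp [algebraMap_ne_zero hs0, algebraMap_ne_zero ht0]

theorem HasPoleOrderLE.algebraMap_mul (p : F[X]) (h : HasPoleOrderLE r n x) :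
    HasPoleOrderLE r n (ι p * x) := by
  obtain ⟨a, s, hs, rfl⟩ := h
  exact ⟨p * a, s, hs, by rw [map_mul ι p a, mul_div_assoc]⟩

theorem HasPoleOfOrder.le_of_hasPoleOrderLE (hr : Prime r) (hn : HasPoleOfOrder r n x)
    (hm : HasPoleOrderLE r m x) : n ≤ m := by
  obtain ⟨a, s, ha, hs, rfl⟩ := hn
  obtain ⟨b, t, ht, hx⟩ := hm
  have hs0 : s ≠ 0 := by rintro rfl; exact hs (dvd_zero r)
  have ht0 : t ≠ 0 := by rintro rfl; exact ht (dvd_zero r)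
  rw [algebraMap_div_eq_algebraMap_div_iff (mul_ne_zero (pow_ne_zero _ hr.ne_zero) hs0)
    (mul_ne_zero (pow_ne_zero _ hr.ne_zero) ht0)] at hx
  by_contra! hmn
  obtain ⟨k, rfl⟩ := Nat.exists_eq_add_of_lt hmn
  have hat : a * t = r * (r ^ k * b * s) := by
    apply mul_left_cancel₀ (pow_ne_zero m hr.ne_zero)
    linear_combination hx
  exact (hr.dvd_or_dvd (hat ▸ dvd_mul_right r _)).elim ha ht

theorem HasPoleOfOrder.derivation [CharZero F] (hδ : ∀ p, δ (ι p) = ι (derivative p))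
    (hr : Prime r) (h : HasPoleOfOrder r (n + 1) x) : HasPoleOfOrder r (n + 2) (δ x) := by
  obtain ⟨a, s, ha, hs, rfl⟩ := h
  have hs0 : s ≠ 0 := by rintro rfl; exact hs (dvd_zero r)
  have hD : r ^ (n + 1) * s ≠ 0 := mul_ne_zero (pow_ne_zero _ hr.ne_zero) hs0
  -- after cancelling `r ^ n`, the numerator is `-(n + 1) a r' s` modulo `r`
  refine ⟨r * (derivative a * s - a * derivative s)
      - Polynomial.C ((n : F) + 1) * (a * derivative r * s),
    s ^ 2, fun hdvd => ?_, fun hdvd => hs (hr.dvd_of_dvd_pow hdvd), ?_⟩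
  · have hunit : ¬ r ∣ Polynomial.C ((n : F) + 1) := fun hdvd =>
      hr.not_isUnit (isUnit_of_dvd_unit hdvd (isUnit_C.mpr (Nat.cast_add_one_ne_zero n).isUnit))
    have hdvd' := dvd_sub (dvd_mul_right r (derivative a * s - a * derivative s)) hdvd
    rw [sub_sub_cancel] at hdvd'
    simp only [hr.dvd_mul] at hdvd'
    rcases hdvd' with h | (h | h) | h
    exacts [hunit h, ha h, hr.not_dvd_derivative h, hs h]
  · rw [derivation_algebraMap_div hδ _ hD, algebraMap_div_eq_algebraMap_div_iff (pow_ne_zero 2 hD)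
      (mul_ne_zero (pow_ne_zero _ hr.ne_zero) (pow_ne_zero 2 hs0))]
    simp only [derivative_mul, derivative_pow, map_add, map_one, map_natCast]
    push_cast
    ring

theorem exists_hasPoleOfOrder_of_denom_ne_one (x : RatFunc F) (hx : x.denom ≠ 1) :
    ∃ r n, Prime r ∧ HasPoleOfOrder r (n + 1) x := by
  obtain ⟨r, hr, hrq⟩ := WfDvdMonoid.exists_irreducible_factor
    (mt x.monic_denom.isUnit_iff.mp hx) x.denom_ne_zero
  obtain ⟨k, s, hs, hq⟩ := WfDvdMonoid.max_power_factor x.denom_ne_zero hr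
  obtain _ | n := k
  · rw [pow_zero, one_mul] at hq
    exact absurd (hq ▸ hrq) hs
  refine ⟨r, n, hr.prime, x.num, s, fun hdvd => hr.not_isUnit ?_, hs, ?_⟩
  · exact x.isCoprime_num_denom.isUnit_of_dvd' hdvd hrq
  · rw [← hq, num_div_denom]

theorem exists_eq_algebraMap_of_derivation_eq [CharZero F]
    (hδ : ∀ p, δ (ι p) = ι (derivative p)) {b : RatFunc F} (p₂ p₁ p₀ c : F[X])
    (h : δ (δ (δ b)) = ι p₂ * δ (δ b) + ι p₁ * δ b + ι p₀ * b + ι c) :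
    ∃ p, b = ι p := by
  by_cases hb : b.denom = 1
  · exact ⟨b.num, by simpa [hb] using (num_div_denom b).symm⟩
  obtain ⟨r, n, hr, hpole⟩ := exists_hasPoleOfOrder_of_denom_ne_one b hb
  have h₁ := hpole.derivation hδ hr
  have h₂ := h₁.derivation hδ hr
  have h₃ := h₂.derivation hδ hr
  have hrhs : HasPoleOrderLE r (n + 3) (δ (δ (δ b))) := by
    rw [h]
    refine (((h₂.hasPoleOrderLE.algebraMap_mul p₂).add hr ?_).add hr ?_).add hr
      (hasPoleOrderLE_algebraMap hr _ c)
    · exact (h₁.hasPoleOrderLE.mono hr (by omega)).algebraMap_mul p₁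
    · exact (hpole.hasPoleOrderLE.mono hr (by omega)).algebraMap_mul p₀
  have := h₃.le_of_hasPoleOrderLE hr hrhs
  omega

end RatFunc

theorem stmt_11 (F : Type*) [Field F] [CharZero F] (t : F)
    (δ : Derivation ℤ (RatFunc F) (RatFunc F))
    (hδX : δ RatFunc.X = 1)
    (hδC : ∀ c : F, δ (RatFunc.C c) = 0) :
    (¬ ∃ b : Polynomial F,
        Polynomial.C (2⁻¹ : F) * (derivative (derivative (derivative b))) =
          2 * derivative b * (Polynomial.C (4⁻¹ : F) * Polynomial.X ^ 2 + Polynomial.C t)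
            + b * (Polynomial.C (2⁻¹ : F) * Polynomial.X) - 1) ∧
    (¬ ∃ b : RatFunc F,
        (1 / 2 : RatFunc F) * δ (δ (δ b)) =
          2 * δ b * (RatFunc.X ^ 2 / 4 + RatFunc.C t)
            + b * (RatFunc.X / 2) - 1) := by
  have hδ := RatFunc.derivation_algebraMap_eq_derivative hδX hδC
  refine ⟨fun ⟨b, hb⟩ => derivative_derivative_derivative_ne (4 * t) two_ne_zero b ?_,
    fun ⟨b, hb⟩ => ?_⟩
  · have h2 : C (2⁻¹ : F) * 2 = 1 := by
      rw [← map_ofNat C 2, ← C_mul, inv_mul_cancel₀ two_ne_zero, C_1]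
    have h4 : C (4⁻¹ : F) * 4 = 1 := by
      rw [← map_ofNat C 4, ← C_mul, inv_mul_cancel₀ (by norm_num), C_1]
    simp only [derivative_mul, derivative_X, one_mul, map_mul, map_ofNat]
    linear_combination 2 * hb + (X * b - derivative (derivative (derivative b))) * h2
      + X ^ 2 * derivative b * h4
  · obtain ⟨p, rfl⟩ := RatFunc.exists_eq_algebraMap_of_derivation_eq hδ
      0 (X ^ 2 + C (4 * t)) X (-2) (by
        simp only [map_zero, zero_mul, zero_add, map_add, map_mul, map_pow, map_neg, map_ofNat,
          RatFunc.algebraMap_X, RatFunc.algebraMap_C]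
        linear_combination 2 * hb)
    simp only [hδ] at hb
    refine derivative_derivative_derivative_ne (4 * t) two_ne_zero p
      (RatFunc.algebraMap_injective F ?_)
    simp only [derivative_mul, derivative_X, one_mul, map_add, map_sub, map_mul,
      map_ofNat, RatFunc.algebraMap_X, RatFunc.algebraMap_C]
    linear_combination 2 * hb
end
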